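/- Gradient bound at the projected test point: let f : E → ℝ be twice continuously differentiable with L-Lipschitz-continuous Hessian (L > 0). Fix x ∈ E, let H be a symmetric positive semidefinite linear map, let P : E → E be an orthogonal projection (symmetric and idempotent) with H∘P = H and ‖(H − ∇²f(x))∘P‖ ≤ η for some η ≥ 0, and let x⁺ ∈ E satisfy ∇f(x) + (H + αI)(x⁺ − x) = 0 with α = (L/2)·r + η, where r := ‖x⁺ − x‖. Define y⁺ := x + P(x⁺ − x). Then ‖∇f(y⁺)‖ ≤ 2η·r + L·r². -/

import Mathlib

open scoped RealInnerProductSpace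
open Real Set

def IsSymmPSD {n : ℕ} (H : EuclideanSpace ℝ (Fin n) →L[ℝ] EuclideanSpace ℝ (Fin n)) : Prop :=
  (∀ u v, ⟪H u, v⟫ = ⟪u, H v⟫) ∧ ∀ u, 0 ≤ ⟪H u, u⟫

noncomputable def hess {n : ℕ} (f : EuclideanSpace ℝ (Fin n) → ℝ)
    (x : EuclideanSpace ℝ (Fin n)) :
    EuclideanSpace ℝ (Fin n) →L[ℝ] EuclideanSpace ℝ (Fin n) :=
  fderiv ℝ (gradient f) x

/-!
Subtracting the step equation `∇f(x) + H s + α s = 0`, where `s = x⁺ − x`, and using `H P = H`,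
`∇f(y⁺)` splits into the first-order Taylor remainder of `∇f` at `x` along `P s`, the model error
`(H − ∇²f(x)) P s` and `−α s`. Since an orthogonal projection is a contraction, with `r = ‖s‖` these
have norms at most `(L/2) r²`, `η r` and `α r = (L/2) r² + η r`.
-/

section Taylor

variable {E F : Type*} [NormedAddCommGroup E] [NormedSpace ℝ E]
  [NormedAddCommGroup F] [NormedSpace ℝ F]

theorem norm_image_add_sub_sub_fderiv_le {g : E → F} {g' : E → E →L[ℝ] F} {L : ℝ} {x : E}
    (hg : ∀ y, HasFDerivAt g (g' y) y) (hLip : ∀ y, ‖g' y - g' x‖ ≤ L * ‖y - x‖) (p : E) :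
    ‖g (x + p) - g x - g' x p‖ ≤ L / 2 * ‖p‖ ^ 2 := by
  set ψ : ℝ → F := fun t => g (x + t • p) - g x - t • g' x p with hψ
  have hψ' (t : ℝ) : HasDerivAt ψ (g' (x + t • p) p - g' x p) t := by
    have hline : HasDerivAt (fun t : ℝ => x + t • p) p t := by
      simpa using ((hasDerivAt_id t).smul_const p).const_add x
    have hlin : HasDerivAt (fun t : ℝ => t • g' x p) (g' x p) t := by
      simpa using (hasDerivAt_id t).smul_const (g' x p)
    exact (((hg _).comp_hasDerivAt t hline).sub_const (g x)).sub hlin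
  have hB (t : ℝ) : HasDerivAt (fun t => L / 2 * ‖p‖ ^ 2 * t ^ 2) (L * ‖p‖ ^ 2 * t) t :=
    ((hasDerivAt_pow 2 t).const_mul _).congr_deriv (by ring)
  have hbound (t : ℝ) (ht : t ∈ Ico (0 : ℝ) 1) :
      ‖g' (x + t • p) p - g' x p‖ ≤ L * ‖p‖ ^ 2 * t :=
    calc ‖g' (x + t • p) p - g' x p‖ ≤ ‖g' (x + t • p) - g' x‖ * ‖p‖ :=
          (g' (x + t • p) - g' x).le_opNorm p
      _ ≤ L * ‖t • p‖ * ‖p‖ := by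
          gcongr
          simpa using hLip (x + t • p)
      _ = L * ‖p‖ ^ 2 * t := by
          rw [norm_smul, Real.norm_of_nonneg ht.1]
          ring
  -- Comparing `ψ` with `t ↦ (L/2)‖p‖² t²`, not the mean value inequality, keeps the factor `1/2`.
  simpa [hψ] using image_norm_le_of_norm_deriv_right_le_deriv_boundary
    (fun t _ => (hψ' t).continuousAt.continuousWithinAt) (fun t _ => (hψ' t).hasDerivWithinAt)
    (by simp [hψ]) hB hbound (right_mem_Icc.2 zero_le_one)

end Taylor

section InnerProduct

variable {E : Type*} [NormedAddCommGroup E] [InnerProductSpace ℝ E] [CompleteSpace E]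

theorem ContDiff.gradient {f : E → ℝ} {n : WithTop ℕ∞} (hf : ContDiff ℝ (n + 1) f) :
    ContDiff ℝ n (gradient f) :=
  (InnerProductSpace.toDual ℝ E).symm.contDiff.comp (hf.fderiv_right le_rfl)

theorem ContinuousLinearMap.opNorm_le_one_of_symmetric_of_idempotent {P : E →L[ℝ] E}
    (hsym : ∀ u v, ⟪P u, v⟫ = ⟪u, P v⟫) (hidem : P.comp P = P) : ‖P‖ ≤ 1 :=
  (isStarProjection_iff_isSymmetricProjection.mpr
    ⟨congrArg ContinuousLinearMap.toLinearMap hidem, hsym⟩).norm_le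

end InnerProduct

theorem hasFDerivAt_gradient_hess {n : ℕ} {f : EuclideanSpace ℝ (Fin n) → ℝ}
    (hf : ContDiff ℝ 2 f) (y : EuclideanSpace ℝ (Fin n)) :
    HasFDerivAt (gradient f) (hess f y) y :=
  ((ContDiff.gradient (n := 1) hf).differentiable one_ne_zero y).hasFDerivAt

theorem gradient_bound_projected_point_general {n : ℕ}
    (f : EuclideanSpace ℝ (Fin n) → ℝ) (hf : ContDiff ℝ 2 f)
    (L : ℝ) (hL : 0 < L)
    (hLip : ∀ x y, ‖hess f x - hess f y‖ ≤ L * ‖x - y‖)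
    (x xp : EuclideanSpace ℝ (Fin n))
    (H P : EuclideanSpace ℝ (Fin n) →L[ℝ] EuclideanSpace ℝ (Fin n))
    (hPsym : ∀ u v, ⟪P u, v⟫ = ⟪u, P v⟫) (hPidem : P.comp P = P)
    (hHP : H.comp P = H)
    (η : ℝ) (hη : 0 ≤ η) (hHerr : ‖(H - hess f x).comp P‖ ≤ η)
    (α : ℝ) (hα : α = L / 2 * ‖xp - x‖ + η)
    (hstep : gradient f x + H (xp - x) + α • (xp - x) = 0)
    (yp : EuclideanSpace ℝ (Fin n)) (hyp : yp = x + P (xp - x)) :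
    ‖gradient f yp‖ ≤ 2 * η * ‖xp - x‖ + L * ‖xp - x‖ ^ 2 := by
  set s := xp - x
  have hPs : ‖P s‖ ≤ ‖s‖ := by
    simpa using P.le_of_opNorm_le (P.opNorm_le_one_of_symmetric_of_idempotent hPsym hPidem) s
  have hHPs : H (P s) = H s := congrArg (fun T => T s) hHP
  have hsplit : gradient f yp = (gradient f (x + P s) - gradient f x - hess f x (P s))
      - ((H - hess f x).comp P) s - α • s := by
    rw [hyp, ContinuousLinearMap.comp_apply, sub_apply, hHPs]
    linear_combination (norm := module) hstep
  have htaylor : ‖gradient f (x + P s) - gradient f x - hess f x (P s)‖ ≤ L / 2 * ‖s‖ ^ 2 :=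
    (norm_image_add_sub_sub_fderiv_le (hasFDerivAt_gradient_hess hf) (fun y => hLip y x) _).trans
      (by gcongr)
  have hmodel : ‖((H - hess f x).comp P) s‖ ≤ η * ‖s‖ :=
    ((H - hess f x).comp P).le_of_opNorm_le hHerr s
  have hαs : ‖α • s‖ = α * ‖s‖ := by
    rw [norm_smul, Real.norm_of_nonneg (by rw [hα]; positivity)]
  calc ‖gradient f yp‖
      ≤ ‖gradient f (x + P s) - gradient f x - hess f x (P s)‖
        + ‖((H - hess f x).comp P) s‖ + ‖α • s‖ := by
        rw [hsplit]
        exact norm_sub_le_of_le (norm_sub_le _ _) le_rfl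
    _ ≤ L / 2 * ‖s‖ ^ 2 + η * ‖s‖ + (L / 2 * ‖s‖ + η) * ‖s‖ := by
        rw [hαs, hα]; gcongr
    _ = 2 * η * ‖s‖ + L * ‖s‖ ^ 2 := by ring

/-- Gradient bound at the projected test point: with an orthogonal projection `P` such that
`H∘P = H` and `‖(H − ∇²f(x))∘P‖ ≤ η`, the step `∇f(x) + (H + αI)(x⁺ − x) = 0` with
`α = (L/2)r + η`, `r = ‖x⁺ − x‖`, and `y⁺ = x + P(x⁺ − x)` satisfies
`‖∇f(y⁺)‖ ≤ 2ηr + Lr²`. -/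
theorem gradient_bound_projected_point {n : ℕ}
    (f : EuclideanSpace ℝ (Fin n) → ℝ) (hf : ContDiff ℝ 2 f)
    (L : ℝ) (hL : 0 < L)
    (hLip : ∀ x y, ‖hess f x - hess f y‖ ≤ L * ‖x - y‖)
    (x xp : EuclideanSpace ℝ (Fin n))
    (H P : EuclideanSpace ℝ (Fin n) →L[ℝ] EuclideanSpace ℝ (Fin n))
    (hH : IsSymmPSD H)
    (hPsym : ∀ u v, ⟪P u, v⟫ = ⟪u, P v⟫) (hPidem : P.comp P = P)
    (hHP : H.comp P = H)
    (η : ℝ) (hη : 0 ≤ η) (hHerr : ‖(H - hess f x).comp P‖ ≤ η)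
    (α : ℝ) (hα : α = L / 2 * ‖xp - x‖ + η)
    (hstep : gradient f x + H (xp - x) + α • (xp - x) = 0)
    (yp : EuclideanSpace ℝ (Fin n)) (hyp : yp = x + P (xp - x)) :
    ‖gradient f yp‖ ≤ 2 * η * ‖xp - x‖ + L * ‖xp - x‖ ^ 2 :=
  gradient_bound_projected_point_general f hf L hL hLip x xp H P hPsym hPidem hHP η hη hHerr α hα
    hstep yp hyp
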